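/- Discrete maximum bound principle for the scalar ETD1 step: suppose |u| ≤ 1 and |N(u)| ≤ S for a constant S > 0. Then for any Δt > 0, the ETD1 update u⁺ = e^{-SΔt}u + Δt·((1 - e^{-SΔt})/(SΔt))·N(u) satisfies |u⁺| ≤ 1. -/

import Mathlib

/-! The ETD1 update is the convex combination `e • u + (1 - e) • (N u / S)` with weight
`e = exp (-(S * Δt)) ∈ (0, 1]`, and both `u` and `N u / S` lie in the unit ball. -/

open Metric

theorem norm_convexComb_le {E : Type*} [SeminormedAddCommGroup E] [NormedSpace ℝ E]
    {θ r : ℝ} {x y : E} (hθ₀ : 0 ≤ θ) (hθ₁ : θ ≤ 1) (hx : ‖x‖ ≤ r) (hy : ‖y‖ ≤ r) :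
    ‖θ • x + (1 - θ) • y‖ ≤ r := by
  rw [← mem_closedBall_zero_iff] at hx hy ⊢
  exact convex_closedBall 0 r hx hy hθ₀ (sub_nonneg.2 hθ₁) (add_sub_cancel θ 1)

theorem etd1_mbp (S Δt : ℝ) (hS : 0 < S) (hΔt : 0 < Δt)
    (u : ℝ) (hu : |u| ≤ 1) (N : ℝ → ℝ) (hN : |N u| ≤ S) :
    |Real.exp (-(S * Δt)) * u + ((1 - Real.exp (-(S * Δt))) / S) * N u| ≤ 1 := by
  set e := Real.exp (-(S * Δt))
  have he_le_one : e ≤ 1 := Real.exp_le_one_iff.2 (neg_nonpos.2 (mul_pos hS hΔt).le)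
  have hNS : |N u / S| ≤ 1 := by
    rw [abs_div, abs_of_pos hS]
    exact div_le_one_of_le₀ hN hS.le
  have hupdate : e * u + (1 - e) / S * N u = e • u + (1 - e) • (N u / S) := by
    simp only [smul_eq_mul]
    ring
  rw [hupdate]
  exact norm_convexComb_le (E := ℝ) (Real.exp_pos _).le he_le_one hu hNS
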